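/- arXiv:2105.03420 — 8 statements merged into one kernel-verified Lean document; each statement's English description precedes it below -/
import Mathlib

section
/- For sampling without replacement as above, for any t > 0, the probability that i ≥ E[i] + t·n is at most exp(−2t²n), and likewise the probability that i ≤ E[i] − t·n is at most exp(−2t²n); hence P(|i − E[i]| ≥ t·n) ≤ 2·exp(−2t²n). -/
open scoped BigOperators Classical


/-- Hoeffding's lemma (mgf form). -/
lemma hoeffding_mgf (p : ℝ) (hp0 : 0 ≤ p) (hp1 : p ≤ 1) (l : ℝ) (hl : 0 ≤ l) :
    1 - p + p * Real.exp l ≤ Real.exp (p * l + l ^ 2 / 8) := by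
  set q : ℝ := 1 - p with hq
  have hq0 : 0 ≤ q := by simp only [hq]; linarith
  set F : ℝ → ℝ := fun x => q * Real.exp (-p * x) + p * Real.exp (q * x) with hF
  set F₁ : ℝ → ℝ := fun x => p * q * (Real.exp (q * x) - Real.exp (-p * x)) with hF₁
  set H : ℝ → ℝ := fun x => x / 4 - F₁ x / F x with hH
  have hFpos : ∀ x, 0 < F x := by
    intro x
    rcases eq_or_lt_of_le hp0 with h | h
    · have hFx : F x = Real.exp (-p * x) := by simp [hF, hq, ← h]
      rw [hFx]; exact Real.exp_pos _
    · have h1 : 0 < p * Real.exp (q * x) := by positivity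
      have h2 : 0 ≤ q * Real.exp (-p * x) := by positivity
      simp only [hF]; linarith
  have hexp1 : ∀ x : ℝ, HasDerivAt (fun x : ℝ => Real.exp (-p * x)) (Real.exp (-p * x) * (-p)) x := by
    intro x
    simpa using ((hasDerivAt_id x).const_mul (-p)).exp
  have hexp2 : ∀ x : ℝ, HasDerivAt (fun x : ℝ => Real.exp (q * x)) (Real.exp (q * x) * q) x := by
    intro x
    simpa using ((hasDerivAt_id x).const_mul q).exp
  have hFd : ∀ x, HasDerivAt F (F₁ x) x := by
    intro x
    have := (((hexp1 x).const_mul q).add ((hexp2 x).const_mul p))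
    refine this.congr_deriv ?_
    simp only [hF₁]; ring
  have hF₁d : ∀ x, HasDerivAt F₁ (p * q * (Real.exp (q * x) * q - Real.exp (-p * x) * (-p))) x :=
    fun x => ((hexp2 x).sub (hexp1 x)).const_mul (p * q)
  have hHd : ∀ x, HasDerivAt H
      (1 / 4 - ((p * q * (Real.exp (q * x) * q - Real.exp (-p * x) * (-p))) * F x - F₁ x * F₁ x) / F x ^ 2) x := by
    intro x
    have hdiv : HasDerivAt (fun x => F₁ x / F x)
        (((p * q * (Real.exp (q * x) * q - Real.exp (-p * x) * (-p))) * F x - F₁ x * F₁ x) / F x ^ 2) x :=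
      (hF₁d x).div (hFd x) (hFpos x).ne'
    have hlin : HasDerivAt (fun x : ℝ => x / 4) (1 / 4) x := by
      simpa using (hasDerivAt_id x).div_const 4
    exact hlin.sub hdiv
  have hHderiv_nonneg : ∀ x, 0 ≤ 1 / 4 - ((p * q * (Real.exp (q * x) * q - Real.exp (-p * x) * (-p))) * F x - F₁ x * F₁ x) / F x ^ 2 := by
    intro x
    have hFeq : F x = q * Real.exp (-p * x) + p * Real.exp (q * x) := rfl
    have hnum : (p * q * (Real.exp (q * x) * q - Real.exp (-p * x) * (-p))) * F x - F₁ x * F₁ x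
        = p * q * Real.exp (-p * x) * Real.exp (q * x) := by
      simp only [hF, hF₁]; ring
    rw [hnum, sub_nonneg, div_le_iff₀ (pow_pos (hFpos x) 2), hFeq]
    have expand : (q * Real.exp (-p * x) + p * Real.exp (q * x)) ^ 2
        = (q * Real.exp (-p * x) - p * Real.exp (q * x)) ^ 2
          + 4 * (p * q * Real.exp (-p * x) * Real.exp (q * x)) := by ring
    rw [expand]
    have hsq : (0:ℝ) ≤ (q * Real.exp (-p * x) - p * Real.exp (q * x)) ^ 2 := sq_nonneg _
    set S := (q * Real.exp (-p * x) - p * Real.exp (q * x)) ^ 2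
    set P := p * q * Real.exp (-p * x) * Real.exp (q * x)
    linarith
  have hHmono : Monotone H := by
    apply monotone_of_deriv_nonneg
    · exact fun x => (hHd x).differentiableAt
    · intro x
      rw [(hHd x).deriv]
      exact hHderiv_nonneg x
  have hH0 : H 0 = 0 := by simp [hH, hF₁]
  have hHnonneg : ∀ x, 0 ≤ x → 0 ≤ H x := by
    intro x hx
    have := hHmono hx
    rwa [hH0] at this
  set g : ℝ → ℝ := fun x => x ^ 2 / 8 - Real.log (F x) with hg
  have hgd : ∀ x, HasDerivAt g (H x) x := by
    intro x
    have hlog : HasDerivAt (fun x => Real.log (F x)) (F₁ x / F x) x :=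
      (hFd x).log (hFpos x).ne'
    have hsq : HasDerivAt (fun x : ℝ => x ^ 2 / 8) (x / 4) x := by
      have := ((hasDerivAt_pow 2 x).div_const 8)
      refine this.congr_deriv ?_
      ring
    exact hsq.sub hlog
  have hgdiff : Differentiable ℝ g := fun x => (hgd x).differentiableAt
  have hgmono : MonotoneOn g (Set.Ici (0 : ℝ)) := by
    apply monotoneOn_of_deriv_nonneg (convex_Ici 0) hgdiff.continuous.continuousOn
    · intro x _
      exact (hgdiff x).differentiableWithinAt
    · intro x hx
      rw [interior_Ici] at hx
      rw [(hgd x).deriv]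
      exact hHnonneg x (le_of_lt hx)
  have hF0 : F 0 = 1 := by simp [hF, hq]
  have hg0 : g 0 = 0 := by simp [hg, hF0]
  have hgl : 0 ≤ g l := by
    have := hgmono Set.self_mem_Ici (Set.mem_Ici.mpr hl) hl
    rwa [hg0] at this
  have hlogF : Real.log (F l) ≤ l ^ 2 / 8 := by
    simp only [hg] at hgl; linarith
  have hFl : F l ≤ Real.exp (l ^ 2 / 8) := by
    calc F l = Real.exp (Real.log (F l)) := (Real.exp_log (hFpos l)).symm
      _ ≤ Real.exp (l ^ 2 / 8) := Real.exp_le_exp.mpr hlogF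
  have key : Real.exp (p * l) * F l = 1 - p + p * Real.exp l := by
    have e1 : Real.exp (p * l) * Real.exp (-p * l) = 1 := by rw [← Real.exp_add]; simp
    have e2 : Real.exp (p * l) * Real.exp (q * l) = Real.exp l := by
      rw [← Real.exp_add]; congr 1; rw [hq]; ring
    simp only [hF]
    calc Real.exp (p * l) * (q * Real.exp (-p * l) + p * Real.exp (q * l))
        = q * (Real.exp (p * l) * Real.exp (-p * l)) + p * (Real.exp (p * l) * Real.exp (q * l)) := by ring
      _ = q + p * Real.exp l := by rw [e1, e2]; ring
      _ = 1 - p + p * Real.exp l := by rw [hq]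
  rw [← key]
  calc Real.exp (p * l) * F l ≤ Real.exp (p * l) * Real.exp (l ^ 2 / 8) :=
        mul_le_mul_of_nonneg_left hFl (Real.exp_pos _).le
    _ = Real.exp (p * l + l ^ 2 / 8) := (Real.exp_add _ _).symm


-- descending factorial ratio bound
lemma descFact_ineq (M N : ℕ) (h : M ≤ N) :
    ∀ j, Nat.descFactorial M j * N ^ j ≤ Nat.descFactorial N j * M ^ j := by
  intro j
  induction j with
  | zero => simp
  | succ j ih =>
    rw [Nat.descFactorial_succ, Nat.descFactorial_succ, pow_succ, pow_succ]
    have hstep : (M - j) * N ≤ (N - j) * M := by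
      rw [Nat.sub_mul, Nat.sub_mul, Nat.mul_comm N M]
      exact Nat.sub_le_sub_left (Nat.mul_le_mul_left j h) _
    calc (M - j) * M.descFactorial j * (N ^ j * N)
        = (M.descFactorial j * N ^ j) * ((M - j) * N) := by ring
      _ ≤ (N.descFactorial j * M ^ j) * ((N - j) * M) := Nat.mul_le_mul ih hstep
      _ = (N - j) * N.descFactorial j * (M ^ j * M) := by ring

lemma choose_ratio_ineq (M N j : ℕ) (h : M ≤ N) :
    M.choose j * N ^ j ≤ N.choose j * M ^ j := by
  have h1 := descFact_ineq M N h j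
  rw [Nat.descFactorial_eq_factorial_mul_choose, Nat.descFactorial_eq_factorial_mul_choose] at h1
  have hfac : 0 < j.factorial := Nat.factorial_pos j
  rw [mul_assoc, mul_assoc] at h1
  exact Nat.le_of_mul_le_mul_left h1 hfac

-- number of n-subsets of Fin N containing a fixed j-subset T
lemma card_supersets (N n j : ℕ) (hj : j ≤ n) (T : Finset (Fin N)) (hT : T.card = j) :
    ((Finset.powersetCard n (Finset.univ : Finset (Fin N))).filter (fun s => T ⊆ s)).card
      = (N - j).choose (n - j) := by
  have hcompl : (Tᶜ : Finset (Fin N)).card = N - j := by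
    rw [Finset.card_compl, hT, Fintype.card_fin]
  rw [← hcompl, ← Finset.card_powersetCard]
  apply Finset.card_nbij' (fun s => s \ T) (fun s => s ∪ T)
  · intro s hs
    simp only [Finset.mem_coe, Finset.mem_filter, Finset.mem_powersetCard] at hs
    obtain ⟨⟨_, hcard⟩, hTs⟩ := hs
    rw [Finset.mem_coe, Finset.mem_powersetCard]
    constructor
    · intro a ha
      simp only [Finset.mem_sdiff] at ha
      simp [Finset.mem_compl, ha.2]
    · rw [Finset.card_sdiff_of_subset hTs, hcard, hT]
  · intro s hs
    rw [Finset.mem_coe, Finset.mem_powersetCard] at hs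
    obtain ⟨hsub, hcard⟩ := hs
    have hdisj : Disjoint s T := by
      rw [Finset.disjoint_right]
      intro a haT has
      have := hsub has
      simp [Finset.mem_compl, haT] at this
    simp only [Finset.mem_coe, Finset.mem_filter, Finset.mem_powersetCard]
    refine ⟨⟨Finset.subset_univ _, ?_⟩, Finset.subset_union_right⟩
    rw [Finset.card_union_of_disjoint hdisj, hcard, hT]
    omega
  · intro s hs
    simp only [Finset.mem_coe, Finset.mem_filter, Finset.mem_powersetCard] at hs
    exact Finset.sdiff_union_of_subset hs.2
  · intro s hs
    rw [Finset.mem_coe, Finset.mem_powersetCard] at hs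
    have hdisj : Disjoint s T := by
      rw [Finset.disjoint_right]
      intro a haT has
      have := hs.1 has
      simp [Finset.mem_compl, haT] at this
    exact Finset.union_sdiff_cancel_right hdisj


lemma sum_choose_inter (N n j : ℕ) (hj : j ≤ n) (W : Finset (Fin N)) :
    ∑ s ∈ Finset.powersetCard n (Finset.univ : Finset (Fin N)), ((s ∩ W).card).choose j
      = W.card.choose j * (N - j).choose (n - j) := by
  classical
  have step1 : ∀ s : Finset (Fin N), ((s ∩ W).card).choose j
      = ((Finset.powersetCard j W).filter (fun T => T ⊆ s)).card := by
    intro s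
    rw [← Finset.card_powersetCard j (s ∩ W)]
    congr 1
    ext T
    simp only [Finset.mem_powersetCard, Finset.mem_filter, Finset.subset_inter_iff]
    tauto
  calc ∑ s ∈ Finset.powersetCard n (Finset.univ : Finset (Fin N)), ((s ∩ W).card).choose j
      = ∑ s ∈ Finset.powersetCard n (Finset.univ : Finset (Fin N)),
          ∑ T ∈ Finset.powersetCard j W, if T ⊆ s then 1 else 0 := by
        refine Finset.sum_congr rfl fun s _ => ?_
        rw [step1 s, Finset.card_filter]
    _ = ∑ T ∈ Finset.powersetCard j W,
          ∑ s ∈ Finset.powersetCard n (Finset.univ : Finset (Fin N)), if T ⊆ s then 1 else 0 :=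
        Finset.sum_comm
    _ = ∑ T ∈ Finset.powersetCard j W, (N - j).choose (n - j) := by
        refine Finset.sum_congr rfl fun T hT => ?_
        rw [Finset.mem_powersetCard] at hT
        rw [← Finset.card_filter]
        exact card_supersets N n j hj T hT.2
    _ = W.card.choose j * (N - j).choose (n - j) := by
        rw [Finset.sum_const, Finset.card_powersetCard, smul_eq_mul]

lemma choose_term_bound (N M n j : ℕ) (hN : 0 < N) (hM : M ≤ N) (hn : n ≤ N) (hj : j ≤ n) :
    ((M.choose j * (N - j).choose (n - j) : ℕ) : ℝ)
      ≤ (N.choose n : ℝ) * (n.choose j : ℝ) * ((M : ℝ) / N) ^ j := by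
  have hid : N.choose n * n.choose j = N.choose j * (N - j).choose (n - j) :=
    Nat.choose_mul hj
  have h1 : ((M.choose j : ℕ) : ℝ) ≤ (N.choose j : ℝ) * ((M : ℝ) / N) ^ j := by
    have h2 := choose_ratio_ineq M N j hM
    have h2' : ((M.choose j : ℕ) : ℝ) * (N : ℝ) ^ j ≤ (N.choose j : ℝ) * (M : ℝ) ^ j := by
      exact_mod_cast h2
    have hNj : (0 : ℝ) < (N : ℝ) ^ j := by positivity
    rw [div_pow, ← mul_div_assoc, le_div_iff₀ hNj]
    linarith

  calc ((M.choose j * (N - j).choose (n - j) : ℕ) : ℝ)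
      = ((M.choose j : ℕ) : ℝ) * ((N - j).choose (n - j) : ℝ) := by push_cast; ring
    _ ≤ (N.choose j : ℝ) * ((M : ℝ) / N) ^ j * ((N - j).choose (n - j) : ℝ) := by
        apply mul_le_mul_of_nonneg_right h1 (by positivity)
    _ = ((N.choose j * (N - j).choose (n - j) : ℕ) : ℝ) * ((M : ℝ) / N) ^ j := by
        push_cast; ring
    _ = (N.choose n : ℝ) * (n.choose j : ℝ) * ((M : ℝ) / N) ^ j := by
        rw [← hid]; push_cast; ring

lemma mgf_sum_bound (N M n : ℕ) (hN : 0 < N) (hM : M ≤ N) (hn : n ≤ N)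
    (W : Finset (Fin N)) (hW : W.card = M) (u : ℝ) (hu : 0 ≤ u) :
    ∑ s ∈ Finset.powersetCard n (Finset.univ : Finset (Fin N)),
        (1 + u) ^ ((s ∩ W).card)
      ≤ (N.choose n : ℝ) * (1 + ((M : ℝ) / N) * u) ^ n := by
  classical
  have expand : ∀ s ∈ Finset.powersetCard n (Finset.univ : Finset (Fin N)),
      ((1 : ℝ) + u) ^ ((s ∩ W).card)
        = ∑ j ∈ Finset.range (n + 1), u ^ j * (((s ∩ W).card).choose j : ℝ) := by
    intro s hs
    have hi : (s ∩ W).card ≤ n := by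
      rw [Finset.mem_powersetCard] at hs
      exact le_trans (Finset.card_le_card Finset.inter_subset_left) hs.2.le
    rw [add_comm (1 : ℝ) u, add_pow]
    simp only [one_pow, mul_one]
    apply Finset.sum_subset (Finset.range_subset_range.mpr (by omega))
    intro j hj hj2
    rw [Finset.mem_range, not_lt] at hj2
    rw [Nat.choose_eq_zero_of_lt (by omega)]
    simp
  calc ∑ s ∈ Finset.powersetCard n (Finset.univ : Finset (Fin N)), ((1 : ℝ) + u) ^ ((s ∩ W).card)
      = ∑ s ∈ Finset.powersetCard n (Finset.univ : Finset (Fin N)),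
          ∑ j ∈ Finset.range (n + 1), u ^ j * (((s ∩ W).card).choose j : ℝ) :=
        Finset.sum_congr rfl expand
    _ = ∑ j ∈ Finset.range (n + 1),
          ∑ s ∈ Finset.powersetCard n (Finset.univ : Finset (Fin N)),
            u ^ j * (((s ∩ W).card).choose j : ℝ) := Finset.sum_comm
    _ = ∑ j ∈ Finset.range (n + 1), u ^ j * ((M.choose j * (N - j).choose (n - j) : ℕ) : ℝ) := by
        refine Finset.sum_congr rfl fun j hj => ?_
        rw [Finset.mem_range] at hj
        rw [← Finset.mul_sum]
        congr 1
        rw [← Nat.cast_sum]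
        rw [sum_choose_inter N n j (by omega) W, hW]
    _ ≤ ∑ j ∈ Finset.range (n + 1),
          u ^ j * ((N.choose n : ℝ) * (n.choose j : ℝ) * ((M : ℝ) / N) ^ j) := by
        refine Finset.sum_le_sum fun j hj => ?_
        rw [Finset.mem_range] at hj
        exact mul_le_mul_of_nonneg_left
          (choose_term_bound N M n j hN hM hn (by omega)) (by positivity)
    _ = (N.choose n : ℝ) * (1 + ((M : ℝ) / N) * u) ^ n := by
        rw [add_comm (1 : ℝ) (((M : ℝ) / N) * u), add_pow, Finset.mul_sum]
        refine Finset.sum_congr rfl fun j hj => ?_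
        rw [mul_pow]
        ring

lemma upper_tail (N M n : ℕ) (hN : 0 < N) (hM : M ≤ N) (hn : n ≤ N)
    (W : Finset (Fin N)) (hW : W.card = M) (t : ℝ) (ht : 0 < t) :
    (((Finset.powersetCard n (Finset.univ : Finset (Fin N))).filter
        (fun s => (n : ℝ) * M / N + t * n ≤ ((s ∩ W).card : ℝ))).card : ℝ)
        / (N.choose n : ℝ) ≤ Real.exp (-2 * t ^ 2 * n) := by
  classical
  set P := Finset.powersetCard n (Finset.univ : Finset (Fin N)) with hP
  set p : ℝ := (M : ℝ) / N with hp
  have hNr : (0:ℝ) < (N:ℝ) := by exact_mod_cast hN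
  have hp0 : 0 ≤ p := by positivity
  have hp1 : p ≤ 1 := by
    rw [hp, div_le_one hNr]
    exact_mod_cast hM
  set l : ℝ := 4 * t with hl
  have hl0 : 0 ≤ l := by positivity
  set u : ℝ := Real.exp l - 1 with hu
  have hu0 : 0 ≤ u := by
    rw [hu, sub_nonneg]
    exact Real.one_le_exp hl0
  set a : ℝ := (n : ℝ) * M / N + t * n with ha
  set S := P.filter (fun s => a ≤ ((s ∩ W).card : ℝ)) with hS
  have hchoose_pos : (0:ℝ) < (N.choose n : ℝ) := by
    exact_mod_cast Nat.choose_pos hn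
  have step1 : (S.card : ℝ) * Real.exp (l * a) ≤ ∑ s ∈ P, (1 + u) ^ ((s ∩ W).card) := by
    have h1 : (S.card : ℝ) * Real.exp (l * a) = ∑ _s ∈ S, Real.exp (l * a) := by
      rw [Finset.sum_const, nsmul_eq_mul]
    rw [h1]
    have h2 : ∀ s ∈ S, Real.exp (l * a) ≤ (1 + u) ^ ((s ∩ W).card) := by
      intro s hs
      rw [hS, Finset.mem_filter] at hs
      have hia : a ≤ ((s ∩ W).card : ℝ) := hs.2
      have heq : (1 + u) ^ ((s ∩ W).card) = Real.exp (l * ((s ∩ W).card : ℕ)) := by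
        rw [hu]
        have h3 : (1 : ℝ) + (Real.exp l - 1) = Real.exp l := by ring
        rw [h3, ← Real.exp_nat_mul, mul_comm]
      rw [heq]
      exact Real.exp_le_exp.mpr (mul_le_mul_of_nonneg_left hia hl0)
    calc ∑ _s ∈ S, Real.exp (l * a) ≤ ∑ s ∈ S, (1 + u) ^ ((s ∩ W).card) :=
          Finset.sum_le_sum h2
      _ ≤ ∑ s ∈ P, (1 + u) ^ ((s ∩ W).card) := by
          apply Finset.sum_le_sum_of_subset_of_nonneg (Finset.filter_subset _ _)
          intro s _ _
          positivity
  have step2 := mgf_sum_bound N M n hN hM hn W hW u hu0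
  have step3 : (1 + p * u) ^ n ≤ Real.exp ((n:ℝ) * (p * l + l ^ 2 / 8)) := by
    have hbase : (0:ℝ) ≤ 1 + p * u := by positivity
    have hb : 1 + p * u = 1 - p + p * Real.exp l := by rw [hu]; ring
    rw [hb] at hbase ⊢
    calc (1 - p + p * Real.exp l) ^ n ≤ (Real.exp (p * l + l ^ 2 / 8)) ^ n :=
          pow_le_pow_left₀ hbase (hoeffding_mgf p hp0 hp1 l hl0) n
      _ = Real.exp ((n:ℝ) * (p * l + l ^ 2 / 8)) := (Real.exp_nat_mul _ n).symm
  have hcomb : (S.card : ℝ) * Real.exp (l * a)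
      ≤ (N.choose n : ℝ) * Real.exp ((n:ℝ) * (p * l + l ^ 2 / 8)) :=
    le_trans step1 (le_trans step2 (mul_le_mul_of_nonneg_left step3 hchoose_pos.le))
  have hexpo : (n:ℝ) * (p * l + l ^ 2 / 8) - l * a = -2 * t ^ 2 * (n:ℝ) := by
    rw [ha, hl, hp]
    field_simp
    ring
  rw [div_le_iff₀ hchoose_pos]
  calc (S.card : ℝ)
      ≤ (N.choose n : ℝ) * Real.exp ((n:ℝ) * (p * l + l ^ 2 / 8)) / Real.exp (l * a) := by
        rw [le_div_iff₀ (Real.exp_pos _)]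
        exact hcomb
    _ = (N.choose n : ℝ) * Real.exp ((n:ℝ) * (p * l + l ^ 2 / 8) - l * a) := by
        rw [mul_div_assoc, ← Real.exp_sub]
    _ = Real.exp (-2 * t ^ 2 * n) * (N.choose n : ℝ) := by
        rw [hexpo]; ring

/-- Hoeffding-type concentration for the hypergeometric distribution: if `n` balls
are drawn uniformly without replacement from an urn of `N` balls with `M` white,
`i` denotes the number of white balls drawn and `E[i] = n*M/N`, then for `t > 0`,
`P(i ≥ E[i] + t n) ≤ exp (-2 t² n)`, `P(i ≤ E[i] - t n) ≤ exp (-2 t² n)`, and hence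
`P(|i - E[i]| ≥ t n) ≤ 2 exp (-2 t² n)`. -/
theorem stmt2 (N M n : ℕ) (hN : 0 < N) (hM : M ≤ N) (hn : n ≤ N)
    (Wset : Finset (Fin N)) (hW : Wset.card = M) (t : ℝ) (ht : 0 < t) :
    (((Finset.powersetCard n (Finset.univ : Finset (Fin N))).filter
        (fun s => (n : ℝ) * M / N + t * n ≤ ((s ∩ Wset).card : ℝ))).card : ℝ)
        / (N.choose n : ℝ) ≤ Real.exp (-2 * t ^ 2 * n) ∧
    (((Finset.powersetCard n (Finset.univ : Finset (Fin N))).filter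
        (fun s => ((s ∩ Wset).card : ℝ) ≤ (n : ℝ) * M / N - t * n)).card : ℝ)
        / (N.choose n : ℝ) ≤ Real.exp (-2 * t ^ 2 * n) ∧
    (((Finset.powersetCard n (Finset.univ : Finset (Fin N))).filter
        (fun s => t * n ≤ |((s ∩ Wset).card : ℝ) - (n : ℝ) * M / N|)).card : ℝ)
        / (N.choose n : ℝ) ≤ 2 * Real.exp (-2 * t ^ 2 * n) := by
  classical
  have hNr : (0:ℝ) < (N:ℝ) := by exact_mod_cast hN
  have hup := upper_tail N M n hN hM hn Wset hW t ht
  -- lower tail via the complement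
  have hWc : (Wsetᶜ : Finset (Fin N)).card = N - M := by
    rw [Finset.card_compl, hW, Fintype.card_fin]
  have hlowaux := upper_tail N (N - M) n hN (Nat.sub_le N M) hn Wsetᶜ hWc t ht
  -- identify the two filter sets
  have hcardWc : ∀ s ∈ Finset.powersetCard n (Finset.univ : Finset (Fin N)),
      ((s ∩ Wsetᶜ).card : ℝ) = (n : ℝ) - ((s ∩ Wset).card : ℝ) := by
    intro s hs
    rw [Finset.mem_powersetCard] at hs
    have h1 : (s ∩ Wset).card + (s \ Wset).card = s.card :=
      Finset.card_inter_add_card_sdiff s Wset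
    have h2 : s ∩ Wsetᶜ = s \ Wset := by
      ext x; simp [Finset.mem_sdiff, Finset.mem_compl]
    rw [h2]
    have h4 : (s ∩ Wset).card + (s \ Wset).card = n := h1.trans hs.2
    have h5 : ((s ∩ Wset).card : ℝ) + ((s \ Wset).card : ℝ) = (n : ℝ) := by exact_mod_cast h4
    linarith
  have hsetEq : (Finset.powersetCard n (Finset.univ : Finset (Fin N))).filter
        (fun s => (n : ℝ) * (N - M : ℕ) / N + t * n ≤ ((s ∩ Wsetᶜ).card : ℝ))
      = (Finset.powersetCard n (Finset.univ : Finset (Fin N))).filter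
        (fun s => ((s ∩ Wset).card : ℝ) ≤ (n : ℝ) * M / N - t * n) := by
    apply Finset.filter_congr
    intro s hs
    have h1 := hcardWc s hs
    have h2 : ((N - M : ℕ) : ℝ) = (N : ℝ) - M := by
      push_cast [Nat.cast_sub hM]; ring
    rw [h1, h2]
    constructor
    · intro h
      have h3 : (n:ℝ) * ((N:ℝ) - M) / N = n - (n:ℝ) * M / N := by
        field_simp
      rw [h3] at h
      linarith
    · intro h
      have h3 : (n:ℝ) * ((N:ℝ) - M) / N = n - (n:ℝ) * M / N := by
        field_simp
      rw [h3]
      linarith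
  rw [hsetEq] at hlowaux
  refine ⟨hup, hlowaux, ?_⟩
  -- two-sided bound
  set P := Finset.powersetCard n (Finset.univ : Finset (Fin N)) with hP
  have hchoose_pos : (0:ℝ) < (N.choose n : ℝ) := by
    exact_mod_cast Nat.choose_pos hn
  have hsub : P.filter (fun s => t * n ≤ |((s ∩ Wset).card : ℝ) - (n : ℝ) * M / N|)
      ⊆ (P.filter (fun s => (n : ℝ) * M / N + t * n ≤ ((s ∩ Wset).card : ℝ)))
        ∪ (P.filter (fun s => ((s ∩ Wset).card : ℝ) ≤ (n : ℝ) * M / N - t * n)) := by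
    intro s hs
    rw [Finset.mem_filter] at hs
    obtain ⟨hsP, habs⟩ := hs
    rw [le_abs] at habs
    rw [Finset.mem_union, Finset.mem_filter, Finset.mem_filter]
    rcases habs with h | h
    · left; exact ⟨hsP, by linarith⟩
    · right; exact ⟨hsP, by linarith⟩
  have hcard : ((P.filter (fun s => t * n ≤ |((s ∩ Wset).card : ℝ) - (n : ℝ) * M / N|)).card : ℝ)
      ≤ ((P.filter (fun s => (n : ℝ) * M / N + t * n ≤ ((s ∩ Wset).card : ℝ))).card : ℝ)
        + ((P.filter (fun s => ((s ∩ Wset).card : ℝ) ≤ (n : ℝ) * M / N - t * n)).card : ℝ) := by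
    have := le_trans (Finset.card_le_card hsub) (Finset.card_union_le _ _)
    exact_mod_cast this
  rw [div_le_iff₀ hchoose_pos]
  rw [div_le_iff₀ hchoose_pos] at hup hlowaux
  calc ((P.filter (fun s => t * n ≤ |((s ∩ Wset).card : ℝ) - (n : ℝ) * M / N|)).card : ℝ)
      ≤ ((P.filter (fun s => (n : ℝ) * M / N + t * n ≤ ((s ∩ Wset).card : ℝ))).card : ℝ)
        + ((P.filter (fun s => ((s ∩ Wset).card : ℝ) ≤ (n : ℝ) * M / N - t * n)).card : ℝ) := hcard
    _ ≤ Real.exp (-2 * t ^ 2 * n) * (N.choose n : ℝ) + Real.exp (-2 * t ^ 2 * n) * (N.choose n : ℝ) := by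
        exact add_le_add hup hlowaux
    _ = 2 * Real.exp (-2 * t ^ 2 * n) * (N.choose n : ℝ) := by ring
end

section
/- Let W : X × (S₁ ∪ S₂) → Y be a channel and suppose there exist channels U : X → S₁ and V : X → S₂ such that for all x, x' ∈ X and y ∈ Y, Σ_{s∈S₁} U(s|x')W(y|x,s) = Σ_{s∈S₂} V(s|x)W(y|x',s) (trans-symmetrizability). Then for any two words x_m, x_{m'} ∈ X^n, the output distribution when x_m is sent and the state sequence is drawn coordinatewise from U(·|x_{m',i}) (states in S₁) equals the output distribution when x_{m'} is sent and the state sequence is drawn coordinatewise from V(·|x_{m,i}) (states in S₂). -/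
open scoped BigOperators

/-- Trans-symmetrizability: if `U : X → S₁` and `V : X → S₂` satisfy
`∑_{s∈S₁} U(s|x') W(y|x,s) = ∑_{s∈S₂} V(s|x) W(y|x',s)` for all `x, x', y`, then for
any two words `xm, xm' ∈ X^n`, the output distribution when `xm` is sent with states
drawn coordinatewise from `U (xm' i)` (states in `S₁`) equals the output distribution
when `xm'` is sent with states drawn coordinatewise from `V (xm i)` (states in `S₂`). -/
theorem stmt4 {X S1 S2 Y : Type*} [Fintype X] [Fintype S1] [Fintype S2] [Fintype Y]
    (W : X → S1 ⊕ S2 → Y → ℝ) (hWnn : ∀ x s y, 0 ≤ W x s y)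
    (hWsum : ∀ x s, ∑ y, W x s y = 1)
    (U : X → S1 → ℝ) (hUnn : ∀ x s, 0 ≤ U x s) (hUsum : ∀ x, ∑ s, U x s = 1)
    (V : X → S2 → ℝ) (hVnn : ∀ x s, 0 ≤ V x s) (hVsum : ∀ x, ∑ s, V x s = 1)
    (htrans : ∀ x x' y,
      ∑ s, U x' s * W x (Sum.inl s) y = ∑ s, V x s * W x' (Sum.inr s) y)
    (n : ℕ) (xm xm' : Fin n → X) (y : Fin n → Y) :
    ∑ s : Fin n → S1, (∏ i, U (xm' i) (s i)) * ∏ i, W (xm i) (Sum.inl (s i)) (y i)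
      = ∑ s : Fin n → S2, (∏ i, V (xm i) (s i)) * ∏ i, W (xm' i) (Sum.inr (s i)) (y i) := by
  have h1 : ∑ s : Fin n → S1, (∏ i, U (xm' i) (s i)) * ∏ i, W (xm i) (Sum.inl (s i)) (y i)
      = ∏ i, ∑ s : S1, U (xm' i) s * W (xm i) (Sum.inl s) (y i) := by
    rw [Finset.prod_univ_sum]
    exact Finset.sum_congr rfl fun s _ => (Finset.prod_mul_distrib).symm
  have h2 : ∑ s : Fin n → S2, (∏ i, V (xm i) (s i)) * ∏ i, W (xm' i) (Sum.inr (s i)) (y i)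
      = ∏ i, ∑ s : S2, V (xm i) s * W (xm' i) (Sum.inr s) (y i) := by
    rw [Finset.prod_univ_sum]
    exact Finset.sum_congr rfl fun s _ => (Finset.prod_mul_distrib).symm
  rw [h1, h2]
  exact Finset.prod_congr rfl fun i _ => htrans (xm i) (xm' i) (y i)
end

section
/- Let W : X × S → Y be a channel (finite alphabets) that is not symmetrizable. Then for every distribution P_X on X with full support, min over P_S (distributions on S) of I(X;Y) is strictly positive, where (X,Y) has joint law P_{XY}(x,y) = P_X(x)·Σ_s P_S(s)W(y|x,s). -/
open scoped BigOperators

/-- Mutual information of a joint distribution `p` on `X × Y` (natural logarithm). -/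
noncomputable def mutualInfo {X Y : Type*} [Fintype X] [Fintype Y] (p : X → Y → ℝ) : ℝ :=
  ∑ x, ∑ y, p x y * Real.log (p x y / ((∑ y', p x y') * (∑ x', p x' y)))

lemma gibbs_le (p q : ℝ) (hp : 0 ≤ p) (hq : 0 ≤ q) (h : 0 < p → 0 < q) :
    p - q ≤ p * Real.log (p / q) := by
  rcases hp.eq_or_lt with rfl | hp'
  · simpa using hq
  · have hq' := h hp'
    have h1 : Real.log (q / p) ≤ q / p - 1 := Real.log_le_sub_one_of_pos (by positivity)
    have h2 : Real.log (p / q) = - Real.log (q / p) := by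
      rw [← Real.log_inv]; congr 1; field_simp
    have h3 : p * (q / p - 1) = q - p := by field_simp
    have h4 : p * Real.log (q / p) ≤ q - p := by
      calc p * Real.log (q / p) ≤ p * (q / p - 1) := by nlinarith
        _ = q - p := h3
    rw [h2]; linarith

lemma gibbs_lt (p q : ℝ) (hp : 0 ≤ p) (hq : 0 ≤ q) (h : 0 < p → 0 < q) (hne : p ≠ q) :
    p - q < p * Real.log (p / q) := by
  rcases hp.eq_or_lt with rfl | hp'
  · have : q ≠ 0 := fun hh => hne (hh.symm)
    have : 0 < q := lt_of_le_of_ne hq (Ne.symm this)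
    simp only [zero_mul, zero_sub, neg_lt, neg_zero]
    linarith
  · have hq' := h hp'
    have hx1 : q / p ≠ 1 := by
      intro hh
      rw [div_eq_one_iff_eq hp'.ne'] at hh
      exact hne hh.symm
    have h1 : Real.log (q / p) < q / p - 1 := Real.log_lt_sub_one_of_pos (by positivity) hx1
    have h2 : Real.log (p / q) = - Real.log (q / p) := by
      rw [← Real.log_inv]; congr 1; field_simp
    have h3 : p * (q / p - 1) = q - p := by field_simp
    have h4 : p * Real.log (q / p) < q - p := by
      calc p * Real.log (q / p) < p * (q / p - 1) := by nlinarith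
        _ = q - p := h3
    rw [h2]; linarith

lemma mi_split {X Y : Type*} [Fintype X] [Fintype Y] (p : X → Y → ℝ) (hp : ∀ x y, 0 ≤ p x y) :
    mutualInfo p = (∑ x, ∑ y, p x y * Real.log (p x y))
      - (∑ x, (∑ y, p x y) * Real.log (∑ y, p x y))
      - (∑ y, (∑ x, p x y) * Real.log (∑ x, p x y)) := by
  have key : ∀ x y, p x y * Real.log (p x y / ((∑ y', p x y') * (∑ x', p x' y)))
      = p x y * Real.log (p x y) - p x y * Real.log (∑ y', p x y')
        - p x y * Real.log (∑ x', p x' y) := by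
    intro x y
    rcases (hp x y).eq_or_lt with h | h
    · simp [← h]
    · have hr : 0 < ∑ y', p x y' :=
        lt_of_lt_of_le h (Finset.single_le_sum (fun y' _ => hp x y') (Finset.mem_univ y))
      have hc : 0 < ∑ x', p x' y :=
        lt_of_lt_of_le h (Finset.single_le_sum (fun x' _ => hp x' y) (Finset.mem_univ x))
      rw [Real.log_div h.ne' (by positivity), Real.log_mul hr.ne' hc.ne']
      ring
  unfold mutualInfo
  simp_rw [key, Finset.sum_sub_distrib]
  congr 1
  · congr 1
    exact Finset.sum_congr rfl fun x _ => by rw [← Finset.sum_mul]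
  · rw [Finset.sum_comm]
    exact Finset.sum_congr rfl fun y _ => by rw [← Finset.sum_mul]

lemma mi_pos {X S Y : Type*} [Fintype X] [Fintype S] [Fintype Y]
    (W : X → S → Y → ℝ) (hWnn : ∀ x s y, 0 ≤ W x s y) (hWsum : ∀ x s, ∑ y, W x s y = 1)
    (hnsym : ¬ ∃ U : X → S → ℝ, (∀ x s, 0 ≤ U x s) ∧ (∀ x, ∑ s, U x s = 1) ∧
        ∀ x x' y, ∑ s, U x' s * W x s y = ∑ s, U x s * W x' s y)
    (PX : X → ℝ) (hPXpos : ∀ x, 0 < PX x) (hPXsum : ∑ x, PX x = 1)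
    (q : S → ℝ) (hq0 : ∀ s, 0 ≤ q s) (hq1 : ∑ s, q s = 1) :
    0 < mutualInfo (fun x y => PX x * ∑ s, q s * W x s y) := by
  set P : X → Y → ℝ := fun x y => PX x * ∑ s, q s * W x s y with hPdef
  have hPnn : ∀ x y, 0 ≤ P x y := fun x y =>
    mul_nonneg (hPXpos x).le (Finset.sum_nonneg fun s _ => mul_nonneg (hq0 s) (hWnn x s y))
  set R : X → ℝ := fun x => ∑ y, P x y with hRdef
  set C : Y → ℝ := fun y => ∑ x, P x y with hCdef
  have hRnn : ∀ x, 0 ≤ R x := fun x => Finset.sum_nonneg fun y _ => hPnn x y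
  have hCnn : ∀ y, 0 ≤ C y := fun y => Finset.sum_nonneg fun x _ => hPnn x y
  have hrow : ∀ x, R x = PX x := by
    intro x
    have h1 : ∑ y, ∑ s, q s * W x s y = ∑ s, q s * ∑ y, W x s y := by
      rw [Finset.sum_comm]
      exact Finset.sum_congr rfl fun s _ => by rw [Finset.mul_sum]
    simp only [hRdef, hPdef, ← Finset.mul_sum, h1, hWsum, mul_one, hq1]
  have hsumR : ∑ x, R x = 1 := by simp [hrow, hPXsum]
  have hsumC : ∑ y, C y = 1 := by rw [hCdef]; rw [Finset.sum_comm]; exact hsumR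
  by_contra hcon
  push_neg at hcon
  have hsupp : ∀ x y, 0 < P x y → 0 < R x * C y := by
    intro x y h
    have hR : 0 < R x := lt_of_lt_of_le h (Finset.single_le_sum (fun y' _ => hPnn x y') (Finset.mem_univ y))
    have hC : 0 < C y := lt_of_lt_of_le h (Finset.single_le_sum (fun x' _ => hPnn x' y) (Finset.mem_univ x))
    exact mul_pos hR hC
  set D : X → Y → ℝ := fun x y => P x y * Real.log (P x y / (R x * C y)) - (P x y - R x * C y) with hDdef
  have hDnn : ∀ x y, 0 ≤ D x y :=
    fun x y => sub_nonneg.2 (gibbs_le _ _ (hPnn x y) (mul_nonneg (hRnn x) (hCnn y)) (hsupp x y))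
  have hsumQ : ∑ x, ∑ y, R x * C y = 1 := by
    simp_rw [← Finset.mul_sum, hsumC, mul_one]; exact hsumR
  have hsumP : ∑ x, ∑ y, P x y = 1 := hsumR
  have hDsum : ∑ x, ∑ y, D x y ≤ 0 := by
    have hmi : mutualInfo P = ∑ x, ∑ y, P x y * Real.log (P x y / (R x * C y)) := rfl
    simp_rw [hDdef, Finset.sum_sub_distrib]
    rw [← hmi]
    linarith [hcon, hsumP, hsumQ]
  have hDzero : ∀ x y, D x y = 0 := by
    have hs : ∑ x, ∑ y, D x y = 0 :=
      le_antisymm hDsum (Finset.sum_nonneg fun x _ => Finset.sum_nonneg fun y _ => hDnn x y)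
    intro x y
    have hx := (Finset.sum_eq_zero_iff_of_nonneg
      (fun x _ => Finset.sum_nonneg fun y _ => hDnn x y)).1 hs x (Finset.mem_univ x)
    exact (Finset.sum_eq_zero_iff_of_nonneg (fun y _ => hDnn x y)).1 hx y (Finset.mem_univ y)
  have hPQ : ∀ x y, P x y = R x * C y := by
    intro x y
    by_contra hne
    have hlt := gibbs_lt _ _ (hPnn x y) (mul_nonneg (hRnn x) (hCnn y)) (hsupp x y) hne
    have := hDzero x y
    simp only [hDdef] at this
    linarith
  -- now derive symmetrizability
  apply hnsym
  refine ⟨fun _ s => q s, fun _ s => hq0 s, fun _ => hq1, ?_⟩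
  have hw : ∀ x y, ∑ s, q s * W x s y = C y := by
    intro x y
    have h1 : PX x * ∑ s, q s * W x s y = PX x * C y := by
      have := hPQ x y
      rw [hrow x] at this
      exact this
    exact mul_left_cancel₀ (hPXpos x).ne' h1
  intro x x' y
  rw [hw x y, hw x' y]

/-- If a channel `W : X × S → Y` is not symmetrizable, then for every full-support input
distribution `P_X`, the minimum over state distributions `P_S` of the mutual information
`I(X;Y)` under the joint law `P_X(x) ∑_s P_S(s) W(y|x,s)` is strictly positive. -/
theorem stmt6 {X S Y : Type*} [Fintype X] [Fintype S] [Fintype Y] [Nonempty S]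
    (W : X → S → Y → ℝ) (hWnn : ∀ x s y, 0 ≤ W x s y) (hWsum : ∀ x s, ∑ y, W x s y = 1)
    (hnsym : ¬ ∃ U : X → S → ℝ, (∀ x s, 0 ≤ U x s) ∧ (∀ x, ∑ s, U x s = 1) ∧
        ∀ x x' y, ∑ s, U x' s * W x s y = ∑ s, U x s * W x' s y)
    (PX : X → ℝ) (hPXpos : ∀ x, 0 < PX x) (hPXsum : ∑ x, PX x = 1) :
    0 < ⨅ q : {q : S → ℝ // (∀ s, 0 ≤ q s) ∧ ∑ s, q s = 1},
        mutualInfo (fun x y => PX x * ∑ s, q.1 s * W x s y) := by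
  classical
  set P : (S → ℝ) → X → Y → ℝ := fun q x y => PX x * ∑ s, q s * W x s y with hPdef
  set G : (S → ℝ) → ℝ := fun q =>
      (∑ x, ∑ y, P q x y * Real.log (P q x y))
      - (∑ x, (∑ y, P q x y) * Real.log (∑ y, P q x y))
      - (∑ y, (∑ x, P q x y) * Real.log (∑ x, P q x y)) with hGdef
  have hPnn : ∀ q : S → ℝ, (∀ s, 0 ≤ q s) → ∀ x y, 0 ≤ P q x y := fun q hq x y =>
    mul_nonneg (hPXpos x).le (Finset.sum_nonneg fun s _ => mul_nonneg (hq s) (hWnn x s y))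
  have hFG : ∀ q : S → ℝ, (∀ s, 0 ≤ q s) → mutualInfo (P q) = G q := fun q hq =>
    mi_split (P q) (hPnn q hq)
  -- continuity of G
  have hPc : ∀ x y, Continuous fun q : S → ℝ => P q x y := fun x y =>
    continuous_const.mul (continuous_finset_sum _ fun s _ => (continuous_apply s).mul continuous_const)
  have hGc : Continuous G := by
    have hml := Real.continuous_mul_log
    refine Continuous.sub (Continuous.sub ?_ ?_) ?_
    · exact continuous_finset_sum _ fun x _ => continuous_finset_sum _ fun y _ => hml.comp (hPc x y)
    · exact continuous_finset_sum _ fun x _ =>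
        hml.comp (continuous_finset_sum _ fun y _ => hPc x y)
    · exact continuous_finset_sum _ fun y _ =>
        hml.comp (continuous_finset_sum _ fun x _ => hPc x y)
  -- compact simplex
  have hK : IsCompact (stdSimplex ℝ S) := isCompact_stdSimplex ℝ S
  have hne : (stdSimplex ℝ S).Nonempty := by
    obtain ⟨s0⟩ := (inferInstance : Nonempty S)
    exact ⟨fun s => if s = s0 then 1 else 0,
      fun s => by dsimp only; split <;> norm_num, by simp⟩
  obtain ⟨q0, hq0K, hmin⟩ := hK.exists_isMinOn hne hGc.continuousOn
  have hq0' : (∀ s, 0 ≤ q0 s) ∧ ∑ s, q0 s = 1 := hq0K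
  have hpos : 0 < mutualInfo (P q0) :=
    mi_pos W hWnn hWsum hnsym PX hPXpos hPXsum q0 hq0'.1 hq0'.2
  haveI : Nonempty {q : S → ℝ // (∀ s, 0 ≤ q s) ∧ ∑ s, q s = 1} :=
    ⟨⟨hne.choose, hne.choose_spec⟩⟩
  refine lt_of_lt_of_le hpos (le_ciInf fun i => ?_)
  have hiK : i.1 ∈ stdSimplex ℝ S := i.2
  calc mutualInfo (P q0) = G q0 := hFG q0 hq0'.1
    _ ≤ G i.1 := hmin hiK
    _ = mutualInfo (P i.1) := (hFG i.1 i.2.1).symm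
end

section
/- Let P_{XSY} be a distribution on X × S × Y with D(P_{XSY} ‖ P_X × P_S × W) ≤ η, and let P_{XX'SY} be an extension to X × X × S × Y with I(XY; X'|S) ≤ η (mutual information under P_{XX'SY}). Then D(P_{XX'SY} ‖ P_X × P_{X'} × P_{S|X'} × W) ≤ 2η, where the reference distribution is P_X(x)P_{X'}(x')P_{S|X'}(s|x')W(y|x,s). -/
open scoped BigOperators

variable {X S Y : Type*} [Fintype X] [Fintype S] [Fintype Y]

/-- `X`-marginal of a joint law on `X × X' × S × Y`. -/
noncomputable def margX (p : X → X → S → Y → ℝ) (x : X) : ℝ := ∑ x', ∑ s, ∑ y, p x x' s y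

/-- `X'`-marginal. -/
noncomputable def margX' (p : X → X → S → Y → ℝ) (x' : X) : ℝ := ∑ x, ∑ s, ∑ y, p x x' s y

/-- `S`-marginal. -/
noncomputable def margS (p : X → X → S → Y → ℝ) (s : S) : ℝ := ∑ x, ∑ x', ∑ y, p x x' s y

/-- `(X',S)`-marginal. -/
noncomputable def margSX' (p : X → X → S → Y → ℝ) (x' : X) (s : S) : ℝ := ∑ x, ∑ y, p x x' s y

/-- `(X,S,Y)`-marginal. -/
noncomputable def margXSY (p : X → X → S → Y → ℝ) (x : X) (s : S) (y : Y) : ℝ :=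
  ∑ x', p x x' s y

lemma sum_pos_of {α : Type*} [Fintype α] {f : α → ℝ} (h : ∀ a, 0 ≤ f a) (a : α)
    (ha : 0 < f a) : 0 < ∑ i, f i :=
  Finset.sum_pos' (fun i _ => h i) ⟨a, Finset.mem_univ a, ha⟩

/-- If `D(P_XSY ‖ P_X × P_S × W) ≤ η` and `I(XY;X'|S) ≤ η` under the joint law
`P_XX'SY`, then `D(P_XX'SY ‖ P_X × P_X' × P_{S|X'} × W) ≤ 2η`, where the reference
distribution is `P_X(x) P_X'(x') P_{S|X'}(s|x') W(y|x,s)`. -/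
theorem stmt9 (p : X → X → S → Y → ℝ) (W : X → S → Y → ℝ) (η : ℝ)
    (hpnn : ∀ x x' s y, 0 ≤ p x x' s y)
    (hpsum : ∑ x, ∑ x', ∑ s, ∑ y, p x x' s y = 1)
    (hWnn : ∀ x s y, 0 ≤ W x s y) (hWsum : ∀ x s, ∑ y, W x s y = 1)
    (hac : ∀ x x' s y, 0 < p x x' s y → 0 < W x s y)
    (hD : ∑ x, ∑ s, ∑ y, margXSY p x s y *
        Real.log (margXSY p x s y / (margX p x * margS p s * W x s y)) ≤ η)
    (hI : ∑ x, ∑ x', ∑ s, ∑ y, p x x' s y *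
        Real.log (p x x' s y * margS p s / (margXSY p x s y * margSX' p x' s)) ≤ η) :
    ∑ x, ∑ x', ∑ s, ∑ y, p x x' s y *
      Real.log (p x x' s y /
        (margX p x * margX' p x' * (margSX' p x' s / margX' p x') * W x s y)) ≤ 2 * η := by
  classical
  have hkey : ∀ x x' s y, p x x' s y *
      Real.log (p x x' s y /
        (margX p x * margX' p x' * (margSX' p x' s / margX' p x') * W x s y))
      = p x x' s y * Real.log (margXSY p x s y / (margX p x * margS p s * W x s y))
        + p x x' s y *
          Real.log (p x x' s y * margS p s / (margXSY p x s y * margSX' p x' s)) := by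
    intro x x' s y
    rcases eq_or_lt_of_le (hpnn x x' s y) with h0 | hp
    · simp [← h0]
    · have hW := hac x x' s y hp
      have hmX : 0 < margX p x :=
        sum_pos_of (fun _ => Finset.sum_nonneg fun _ _ => Finset.sum_nonneg fun _ _ => hpnn _ _ _ _) x'
          (sum_pos_of (fun _ => Finset.sum_nonneg fun _ _ => hpnn _ _ _ _) s
            (sum_pos_of (fun _ => hpnn _ _ _ _) y hp))
      have hmX' : 0 < margX' p x' :=
        sum_pos_of (fun _ => Finset.sum_nonneg fun _ _ => Finset.sum_nonneg fun _ _ => hpnn _ _ _ _) x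
          (sum_pos_of (fun _ => Finset.sum_nonneg fun _ _ => hpnn _ _ _ _) s
            (sum_pos_of (fun _ => hpnn _ _ _ _) y hp))
      have hmS : 0 < margS p s :=
        sum_pos_of (fun _ => Finset.sum_nonneg fun _ _ => Finset.sum_nonneg fun _ _ => hpnn _ _ _ _) x
          (sum_pos_of (fun _ => Finset.sum_nonneg fun _ _ => hpnn _ _ _ _) x'
            (sum_pos_of (fun _ => hpnn _ _ _ _) y hp))
      have hmSX' : 0 < margSX' p x' s :=
        sum_pos_of (fun _ => Finset.sum_nonneg fun _ _ => hpnn _ _ _ _) x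
          (sum_pos_of (fun _ => hpnn _ _ _ _) y hp)
      have hmXSY : 0 < margXSY p x s y :=
        sum_pos_of (fun _ => hpnn _ _ _ _) x' hp
      rw [show p x x' s y /
        (margX p x * margX' p x' * (margSX' p x' s / margX' p x') * W x s y)
        = (margXSY p x s y / (margX p x * margS p s * W x s y))
          * (p x x' s y * margS p s / (margXSY p x s y * margSX' p x' s)) by
          field_simp]
      rw [Real.log_mul (by positivity) (by positivity)]
      ring
  simp_rw [hkey, Finset.sum_add_distrib]
  have h1 : ∑ x, ∑ x', ∑ s, ∑ y, p x x' s y *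
      Real.log (margXSY p x s y / (margX p x * margS p s * W x s y))
      = ∑ x, ∑ s, ∑ y, margXSY p x s y *
        Real.log (margXSY p x s y / (margX p x * margS p s * W x s y)) := by
    refine Finset.sum_congr rfl fun x _ => ?_
    rw [Finset.sum_comm]
    refine Finset.sum_congr rfl fun s _ => ?_
    rw [Finset.sum_comm]
    refine Finset.sum_congr rfl fun y _ => ?_
    rw [← Finset.sum_mul]
    rfl
  rw [h1, two_mul]
  exact add_le_add hD hI
end

section
/- If a CAVC is not trans-symmetrizable, then for every input distribution P_X with full support and every pair of state distributions P₁ on S₁ and P₂ on S₂ satisfying Σ_s P₁(s)W(·|·,s) = Σ_s P₂(s)W(·|·,s) =: Z (i.e., Z lies in the intersection of the convex closures), the mutual information I(X;Y) under P_X × Z is strictly positive. -/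
open scoped BigOperators

/-- Pointwise Gibbs bound: `f y - g y ≤ f y * log (f y / g y)` with strictness off equality. -/
lemma gibbs_pointwise {f g : ℝ} (hf : 0 ≤ f) (hg : 0 ≤ g) (hsupp : g = 0 → f = 0) :
    f - g ≤ f * Real.log (f / g) ∧ (f ≠ g → f - g < f * Real.log (f / g)) := by
  rcases eq_or_lt_of_le hf with hf0 | hfpos
  · constructor
    · simp [← hf0]; linarith
    · intro hne
      have hf0' : f = 0 := hf0.symm
      have hgpos : 0 < g := lt_of_le_of_ne hg (fun h => hne (hf0'.trans h))
      rw [hf0']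
      simpa using hgpos
  · have hgpos : 0 < g := by
      rcases eq_or_lt_of_le hg with hg0 | h
      · exact absurd (hsupp hg0.symm) (ne_of_gt hfpos)
      · exact h
    have hratio : 0 < g / f := div_pos hgpos hfpos
    have key : Real.log (g / f) ≤ g / f - 1 := Real.log_le_sub_one_of_pos hratio
    have hlogflip : Real.log (f / g) = - Real.log (g / f) := by
      rw [Real.log_div (ne_of_gt hfpos) (ne_of_gt hgpos),
        Real.log_div (ne_of_gt hgpos) (ne_of_gt hfpos)]; ring
    constructor
    · have := mul_le_mul_of_nonneg_left key hf
      rw [hlogflip]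
      have hfg : f * (g / f) = g := by field_simp
      nlinarith
    · intro hne
      have hne1 : g / f ≠ 1 := by
        intro h
        exact hne ((div_eq_one_iff_eq (ne_of_gt hfpos)).mp h).symm
      have key' : Real.log (g / f) < g / f - 1 := Real.log_lt_sub_one_of_pos hratio hne1
      have := mul_lt_mul_of_pos_left key' hfpos
      rw [hlogflip]
      have hfg : f * (g / f) = g := by field_simp
      nlinarith

/-- If a CAVC is not trans-symmetrizable, then for every full-support input distribution
`P_X` and every pair of state distributions `P₁` on `S₁`, `P₂` on `S₂` inducing a common
channel `Z` in the intersection of the convex closures, the mutual information `I(X;Y)`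
under `P_X × Z` is strictly positive. -/
theorem stmt14 {X S1 S2 Y : Type*} [Fintype X] [Fintype S1] [Fintype S2] [Fintype Y]
    (W : X → S1 ⊕ S2 → Y → ℝ)
    (hWnn : ∀ x s y, 0 ≤ W x s y) (hWsum : ∀ x s, ∑ y, W x s y = 1)
    (hnts : ¬ ∃ (U : X → S1 → ℝ) (V : X → S2 → ℝ),
      (∀ x s, 0 ≤ U x s) ∧ (∀ x, ∑ s, U x s = 1) ∧
      (∀ x s, 0 ≤ V x s) ∧ (∀ x, ∑ s, V x s = 1) ∧
      ∀ x x' y, ∑ s, U x' s * W x (Sum.inl s) y = ∑ s, V x s * W x' (Sum.inr s) y)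
    (PX : X → ℝ) (hPXpos : ∀ x, 0 < PX x) (hPXsum : ∑ x, PX x = 1)
    (P1 : S1 → ℝ) (hP1nn : ∀ s, 0 ≤ P1 s) (hP1sum : ∑ s, P1 s = 1)
    (P2 : S2 → ℝ) (hP2nn : ∀ s, 0 ≤ P2 s) (hP2sum : ∑ s, P2 s = 1)
    (Z : X → Y → ℝ)
    (hZ1 : ∀ x y, Z x y = ∑ s, P1 s * W x (Sum.inl s) y)
    (hZ2 : ∀ x y, Z x y = ∑ s, P2 s * W x (Sum.inr s) y) :
    0 < mutualInfo (fun x y => PX x * Z x y) := by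
  classical
  -- Z is a channel
  have hZnn : ∀ x y, 0 ≤ Z x y := fun x y => by
    rw [hZ1]
    exact Finset.sum_nonneg fun s _ => mul_nonneg (hP1nn s) (hWnn x (Sum.inl s) y)
  have hZsum : ∀ x, ∑ y, Z x y = 1 := fun x => by
    simp only [hZ1, Finset.sum_comm (γ := S1)]
    rw [Finset.sum_comm]
    simp_rw [← Finset.mul_sum, hWsum, mul_one]
    exact hP1sum
  -- Z is not constant in x
  have hnc : ∃ x x' y, Z x y ≠ Z x' y := by
    by_contra h
    push_neg at h
    exact hnts ⟨fun _ s => P1 s, fun _ s => P2 s, fun _ s => hP1nn s, fun _ => hP1sum,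
      fun _ s => hP2nn s, fun _ => hP2sum, fun x x' y => by
        rw [← hZ1 x y, ← hZ2 x' y]; exact h x x' y⟩
  obtain ⟨x0, x0', y0, hne0⟩ := hnc
  -- output marginal
  set Q : Y → ℝ := fun y => ∑ x, PX x * Z x y with hQ
  have hQnn : ∀ y, 0 ≤ Q y := fun y =>
    Finset.sum_nonneg fun x _ => mul_nonneg (hPXpos x).le (hZnn x y)
  have hQsum : ∑ y, Q y = 1 := by
    rw [hQ, Finset.sum_comm]
    simp_rw [← Finset.mul_sum, hZsum, mul_one]
    exact hPXsum
  have hQzero : ∀ y, Q y = 0 → ∀ x, Z x y = 0 := by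
    intro y hy x
    have := (Finset.sum_eq_zero_iff_of_nonneg
      (fun x _ => mul_nonneg (hPXpos x).le (hZnn x y))).mp hy x (Finset.mem_univ x)
    have hpx := (hPXpos x).ne'
    rcases mul_eq_zero.mp this with h | h
    · exact absurd h hpx
    · exact h
  -- some row differs from Q
  have hx1 : ∃ x y, Z x y ≠ Q y := by
    by_contra h
    push_neg at h
    exact hne0 ((h x0 y0).trans (h x0' y0).symm)
  obtain ⟨x1, y1, hne1⟩ := hx1
  -- rewrite mutualInfo
  have hrw : mutualInfo (fun x y => PX x * Z x y)
      = ∑ x, PX x * ∑ y, Z x y * Real.log (Z x y / Q y) := by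
    unfold mutualInfo
    refine Finset.sum_congr rfl fun x _ => ?_
    rw [Finset.mul_sum]
    refine Finset.sum_congr rfl fun y _ => ?_
    have h1 : ∑ y', PX x * Z x y' = PX x := by
      rw [← Finset.mul_sum, hZsum, mul_one]
    have h2 : (∑ x', PX x' * Z x' y) = Q y := rfl
    rw [h1, h2]
    have : PX x * Z x y / (PX x * Q y) = Z x y / Q y :=
      mul_div_mul_left _ _ (hPXpos x).ne'
    rw [this]; ring
  rw [hrw]
  -- each inner KL is ≥ 0, and at x1 it is > 0
  have hKL : ∀ x, 0 ≤ ∑ y, Z x y * Real.log (Z x y / Q y) := by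
    intro x
    have hb : ∀ y ∈ Finset.univ, Z x y - Q y ≤ Z x y * Real.log (Z x y / Q y) := fun y _ =>
      (gibbs_pointwise (hZnn x y) (hQnn y) (fun h => hQzero y h x)).1
    calc (0:ℝ) = ∑ y, (Z x y - Q y) := by rw [Finset.sum_sub_distrib, hZsum, hQsum, sub_self]
    _ ≤ _ := Finset.sum_le_sum hb
  have hKL1 : 0 < ∑ y, Z x1 y * Real.log (Z x1 y / Q y) := by
    have hb : ∀ y ∈ Finset.univ, Z x1 y - Q y ≤ Z x1 y * Real.log (Z x1 y / Q y) := fun y _ =>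
      (gibbs_pointwise (hZnn x1 y) (hQnn y) (fun h => hQzero y h x1)).1
    have hstrict : Z x1 y1 - Q y1 < Z x1 y1 * Real.log (Z x1 y1 / Q y1) :=
      (gibbs_pointwise (hZnn x1 y1) (hQnn y1) (fun h => hQzero y1 h x1)).2 hne1
    calc (0:ℝ) = ∑ y, (Z x1 y - Q y) := by
          rw [Finset.sum_sub_distrib, hZsum, hQsum, sub_self]
    _ < _ := Finset.sum_lt_sum hb ⟨y1, Finset.mem_univ y1, hstrict⟩
  refine Finset.sum_pos' (fun x _ => mul_nonneg (hPXpos x).le (hKL x)) ?_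
  exact ⟨x1, Finset.mem_univ x1, mul_pos (hPXpos x1) hKL1⟩
end

section
/- Consider the CAVC with X a finite set, S_k = X × {k} for k = 1, 2, and deterministic channel: on input x with state (x', 1) the output is (x, x'), and on input x with state (x', 2) the output is (x', x). This channel is trans-symmetrizable (witnessed by U((x',1)|x') = 1 and V((x,2)|x) = 1), but it is not S₁-symmetrizable and not S₂-symmetrizable, provided |X| ≥ 2. -/
open scoped BigOperators

/-- Example 1 of the paper: with `S_k = X × {k}` and the deterministic channel
`W(y|x,(x',1)) = 1_{y = (x,x')}`, `W(y|x,(x',2)) = 1_{y = (x',x)}`, the CAVC is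
trans-symmetrizable but neither `S₁`- nor `S₂`-symmetrizable, provided `|X| ≥ 2`. -/
theorem stmt15 {X : Type*} [Fintype X] [DecidableEq X] (hX : 2 ≤ Fintype.card X) :
    (∃ (U : X → X → ℝ) (V : X → X → ℝ),
      (∀ x s, 0 ≤ U x s) ∧ (∀ x, ∑ s, U x s = 1) ∧
      (∀ x s, 0 ≤ V x s) ∧ (∀ x, ∑ s, V x s = 1) ∧
      ∀ x x' (y : X × X),
        (∑ s, U x' s * (if y = (x, s) then (1 : ℝ) else 0))
          = ∑ s, V x s * (if y = (s, x') then (1 : ℝ) else 0)) ∧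
    ¬ (∃ U : X → X → ℝ, (∀ x s, 0 ≤ U x s) ∧ (∀ x, ∑ s, U x s = 1) ∧
      ∀ x x' (y : X × X),
        (∑ s, U x' s * (if y = (x, s) then (1 : ℝ) else 0))
          = ∑ s, U x s * (if y = (x', s) then (1 : ℝ) else 0)) ∧
    ¬ (∃ U : X → X → ℝ, (∀ x s, 0 ≤ U x s) ∧ (∀ x, ∑ s, U x s = 1) ∧
      ∀ x x' (y : X × X),
        (∑ s, U x' s * (if y = (s, x) then (1 : ℝ) else 0))
          = ∑ s, U x s * (if y = (s, x') then (1 : ℝ) else 0)) := by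
  obtain ⟨a, b, hab⟩ := Fintype.one_lt_card_iff.mp hX
  refine ⟨⟨fun x s => if s = x then 1 else 0, fun x s => if s = x then 1 else 0,
    ?_, ?_, ?_, ?_, ?_⟩, ?_, ?_⟩
  · intro x s; dsimp only; split <;> norm_num
  · intro x; simp
  · intro x s; dsimp only; split <;> norm_num
  · intro x; simp
  · intro x x' y
    rcases y with ⟨y1, y2⟩
    by_cases h1 : y1 = x
    · by_cases h2 : y2 = x'
      · simp [Prod.ext_iff, h1, h2, eq_comm]
      · simp [Prod.ext_iff, h1, h2, eq_comm, Ne.symm h2]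
    · by_cases h2 : y2 = x'
      · simp [Prod.ext_iff, h1, h2, eq_comm, Ne.symm h1]
      · simp [Prod.ext_iff, h1, h2, Ne.symm h1, Ne.symm h2]
  · rintro ⟨U, hpos, hsum, h⟩
    have hz : ∀ s, U b s = 0 := by
      intro s
      have := h a b (a, s)
      simp [hab, Prod.ext_iff] at this
      exact this
    have := hsum b
    simp [hz] at this
  · rintro ⟨U, hpos, hsum, h⟩
    have hz : ∀ s, U b s = 0 := by
      intro s
      have := h a b (s, a)
      simp [hab, Prod.ext_iff] at this
      exact this
    have := hsum b
    simp [hz] at this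
end

section
/- Let Z : X → Y be a channel and suppose for k = 1, 2 there exist state distributions P_k on S_k with Z(y|x) = Σ_s P_k(s)W(y|x,s). For any n, any randomized code Q over encoder-decoder pairs where the decoder outputs an element of {σ₁, σ₂}, let P_id(Q,k) be the worst-case (over state sequences in S_k^n) average probability that the decoder outputs σ_{3−k} when the compound state is σ_k. Then P_id(Q,1) + P_id(Q,2) ≥ 1. In particular, the compound state cannot be identified with vanishing error if the convex closures of the two channel families intersect. -/
open scoped BigOperators

-- average ≤ sup for nonneg weights summing to 1
lemma avg_le_sup {S : Type*} [Fintype S] [Nonempty S] (w f : S → ℝ)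
    (hw : ∀ s, 0 ≤ w s) (hws : ∑ s, w s = 1) :
    ∑ s, w s * f s ≤ ⨆ s, f s := by
  have hbdd : BddAbove (Set.range f) := Set.Finite.bddAbove (Set.finite_range f)
  calc ∑ s, w s * f s ≤ ∑ s, w s * (⨆ s, f s) := by
        refine Finset.sum_le_sum fun s _ => mul_le_mul_of_nonneg_left (le_ciSup hbdd s) (hw s)
    _ = ⨆ s, f s := by rw [← Finset.sum_mul, hws, one_mul]

lemma helper {X S Y M : Type*} [Fintype X] [Fintype S] [DecidableEq S] [Fintype Y] [DecidableEq Y] [Fintype M] [DecidableEq M]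
    (T : X → S → Y → ℝ) (P : S → ℝ) (Z : X → Y → ℝ)
    (hZ : ∀ x y, Z x y = ∑ s, P s * T x s y) (n : ℕ)
    (Q : ((M → Fin n → X) × ((Fin n → Y) → Fin 2)) → ℝ) (b : Fin 2) :
    ∑ s : Fin n → S, (∏ i, P (s i)) *
      (∑ c, Q c * ((1 / (Fintype.card M : ℝ)) * ∑ m : M, ∑ y : Fin n → Y,
        (if c.2 y = b then ∏ i, T (c.1 m i) (s i) (y i) else 0)))
    = ∑ c, Q c * ((1 / (Fintype.card M : ℝ)) * ∑ m : M, ∑ y : Fin n → Y,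
        (if c.2 y = b then ∏ i, Z (c.1 m i) (y i) else 0)) := by
  have key : ∀ (x : Fin n → X) (y : Fin n → Y),
      ∏ i, Z (x i) (y i) = ∑ s : Fin n → S, ∏ i, P (s i) * T (x i) (s i) (y i) := by
    intro x y
    simp_rw [hZ]
    rw [Finset.prod_univ_sum]
    rfl
  simp_rw [Finset.mul_sum]
  rw [Finset.sum_comm]
  refine Finset.sum_congr rfl fun c _ => ?_
  rw [Finset.sum_comm]
  refine Finset.sum_congr rfl fun m _ => ?_
  rw [Finset.sum_comm]
  refine Finset.sum_congr rfl fun y _ => ?_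
  rw [key]
  by_cases h : c.2 y = b
  · simp only [h, if_pos]
    rw [Finset.mul_sum, Finset.mul_sum]
    refine Finset.sum_congr rfl fun s _ => ?_
    rw [Finset.prod_mul_distrib]
    ring
  · simp [h]


/-- If the convex closures of the two channel families intersect (there is `Z` with
`Z(y|x) = ∑_s P₁(s) W(y|x,s) = ∑_s P₂(s) W(y|x,s)`), then for any blocklength `n` and
any randomized code `Q` whose decoder outputs a compound-state guess in `{σ₁, σ₂}`
(`Fin 2`), the two worst-case identification error probabilities satisfy
`P_id(Q,1) + P_id(Q,2) ≥ 1`; so the compound state cannot be identified. -/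
theorem stmt16 {X S1 S2 Y M : Type*} [Fintype X] [Fintype S1] [Fintype S2] [Fintype Y]
    [Fintype M] [DecidableEq M] [Nonempty M] [Nonempty S1] [Nonempty S2] [DecidableEq Y]
    (W : X → S1 ⊕ S2 → Y → ℝ)
    (hWnn : ∀ x s y, 0 ≤ W x s y) (hWsum : ∀ x s, ∑ y, W x s y = 1)
    (P1 : S1 → ℝ) (hP1nn : ∀ s, 0 ≤ P1 s) (hP1sum : ∑ s, P1 s = 1)
    (P2 : S2 → ℝ) (hP2nn : ∀ s, 0 ≤ P2 s) (hP2sum : ∑ s, P2 s = 1)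
    (Z : X → Y → ℝ)
    (hZ1 : ∀ x y, Z x y = ∑ s, P1 s * W x (Sum.inl s) y)
    (hZ2 : ∀ x y, Z x y = ∑ s, P2 s * W x (Sum.inr s) y)
    (n : ℕ)
    (Q : ((M → Fin n → X) × ((Fin n → Y) → Fin 2)) → ℝ)
    (hQnn : ∀ c, 0 ≤ Q c) (hQsum : ∑ c, Q c = 1) :
    1 ≤ (⨆ s : Fin n → S1, ∑ c, Q c * ((1 / (Fintype.card M : ℝ)) *
          ∑ m : M, ∑ y : Fin n → Y,
            (if c.2 y = 1 then ∏ i, W (c.1 m i) (Sum.inl (s i)) (y i) else 0)))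
      + ⨆ s : Fin n → S2, ∑ c, Q c * ((1 / (Fintype.card M : ℝ)) *
          ∑ m : M, ∑ y : Fin n → Y,
            (if c.2 y = 0 then ∏ i, W (c.1 m i) (Sum.inr (s i)) (y i) else 0)) := by
  classical
  have hZsum : ∀ x, ∑ y, Z x y = 1 := by
    intro x
    simp_rw [hZ1, Finset.sum_comm (γ := Y), ← Finset.mul_sum, hWsum, mul_one, hP1sum]
  have h1 := helper (M := M) (fun x s y => W x (Sum.inl s) y) P1 Z hZ1 n Q 1
  have h2 := helper (M := M) (fun x s y => W x (Sum.inr s) y) P2 Z hZ2 n Q 0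
  have hw1 : ∑ s : Fin n → S1, ∏ i, P1 (s i) = 1 := by
    have : (∏ _i : Fin n, ∑ s : S1, P1 s) = ∑ s : Fin n → S1, ∏ i, P1 (s i) := by
      rw [Finset.prod_univ_sum]; rfl
    rw [← this]; simp [hP1sum]
  have hw2 : ∑ s : Fin n → S2, ∏ i, P2 (s i) = 1 := by
    have : (∏ _i : Fin n, ∑ s : S2, P2 s) = ∑ s : Fin n → S2, ∏ i, P2 (s i) := by
      rw [Finset.prod_univ_sum]; rfl
    rw [← this]; simp [hP2sum]
  have hle1 := avg_le_sup (fun s : Fin n → S1 => ∏ i, P1 (s i))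
    (fun s => ∑ c, Q c * ((1 / (Fintype.card M : ℝ)) * ∑ m : M, ∑ y : Fin n → Y,
      (if c.2 y = 1 then ∏ i, W (c.1 m i) (Sum.inl (s i)) (y i) else 0)))
    (fun s => Finset.prod_nonneg fun i _ => hP1nn _) hw1
  have hle2 := avg_le_sup (fun s : Fin n → S2 => ∏ i, P2 (s i))
    (fun s => ∑ c, Q c * ((1 / (Fintype.card M : ℝ)) * ∑ m : M, ∑ y : Fin n → Y,
      (if c.2 y = 0 then ∏ i, W (c.1 m i) (Sum.inr (s i)) (y i) else 0)))
    (fun s => Finset.prod_nonneg fun i _ => hP2nn _) hw2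
  rw [h1] at hle1
  rw [h2] at hle2
  have hZn : ∀ (x : Fin n → X), ∑ y : Fin n → Y, ∏ i, Z (x i) (y i) = 1 := by
    intro x
    have : (∏ i : Fin n, ∑ y : Y, Z (x i) y) = ∑ y : Fin n → Y, ∏ i, Z (x i) (y i) := by
      rw [Finset.prod_univ_sum]; rfl
    rw [← this]; simp [hZsum]
  have hfin : ∑ c, Q c * ((1 / (Fintype.card M : ℝ)) * ∑ m : M, ∑ y : Fin n → Y,
        (if c.2 y = 1 then ∏ i, Z (c.1 m i) (y i) else 0))
      + ∑ c, Q c * ((1 / (Fintype.card M : ℝ)) * ∑ m : M, ∑ y : Fin n → Y,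
        (if c.2 y = 0 then ∏ i, Z (c.1 m i) (y i) else 0)) = 1 := by
    rw [← Finset.sum_add_distrib]
    have : ∀ c : ((M → Fin n → X) × ((Fin n → Y) → Fin 2)),
        Q c * ((1 / (Fintype.card M : ℝ)) * ∑ m : M, ∑ y : Fin n → Y,
          (if c.2 y = 1 then ∏ i, Z (c.1 m i) (y i) else 0))
        + Q c * ((1 / (Fintype.card M : ℝ)) * ∑ m : M, ∑ y : Fin n → Y,
          (if c.2 y = 0 then ∏ i, Z (c.1 m i) (y i) else 0)) = Q c := by
      intro c
      rw [← mul_add, ← mul_add, ← Finset.sum_add_distrib]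
      have hm : ∀ m : M, (∑ y : Fin n → Y, (if c.2 y = 1 then ∏ i, Z (c.1 m i) (y i) else 0))
          + (∑ y : Fin n → Y, (if c.2 y = 0 then ∏ i, Z (c.1 m i) (y i) else 0)) = 1 := by
        intro m
        rw [← Finset.sum_add_distrib]
        have : ∀ y : Fin n → Y, (if c.2 y = 1 then ∏ i, Z (c.1 m i) (y i) else 0)
            + (if c.2 y = 0 then ∏ i, Z (c.1 m i) (y i) else 0) = ∏ i, Z (c.1 m i) (y i) := by
          intro y
          have h01 : c.2 y = 0 ∨ c.2 y = 1 := by omega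
          rcases h01 with h | h <;> simp [h]
        rw [Finset.sum_congr rfl fun y _ => this y, hZn]
      rw [Finset.sum_congr rfl fun m _ => hm m]
      have hM : (0:ℝ) < (Fintype.card M : ℝ) := by
        exact_mod_cast Fintype.card_pos
      field_simp
      simp [Finset.sum_const, Finset.card_univ]
    rw [Finset.sum_congr rfl fun c _ => this c, hQsum]
  linarith
end

section
/- Let W : X × S → Y be a symmetrizable channel with symmetrizing channel U : X → S. For any deterministic code with M codewords x₁,…,x_M and decoder φ : Y^n → {1,…,M}, define the average error under state sequence s as P_e(s) = (1/M)Σ_j W^n(φ⁻¹({j})^c | x_j, s). Then the maximum over randomized state attacks of the expected average error is at least (M−1)/(2M). Concretely, with R(s) = (1/M)Σ_i Π_t U(s_t|x_{i,t}), we have Σ_s R(s)·P_e(s) ≥ (M−1)/(2M). -/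
open scoped BigOperators

lemma stmt17_aux_fubini {n : ℕ} {S : Type*} [Fintype S] (f : Fin n → S → ℝ) :
    ∑ s : Fin n → S, ∏ t, f t (s t) = ∏ t, ∑ a, f t a :=
  (Fintype.prod_sum f).symm

/-- For a symmetrizable channel `W` with symmetrizing channel `U`, any deterministic
code with `M` codewords and decoder `φ` suffers expected average error at least
`(M−1)/(2M)` under the randomized state attack
`R(s) = (1/M) ∑_i ∏_t U(s_t | x_{i,t})`:
`∑_s R(s) · P_e(s) ≥ (M−1)/(2M)` where
`P_e(s) = (1/M) ∑_j W^n(φ⁻¹({j})ᶜ | x_j, s)`. -/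
theorem stmt17 {X S Y : Type*} [Fintype X] [Fintype S] [Fintype Y] [DecidableEq Y]
    (W : X → S → Y → ℝ) (hWnn : ∀ x s y, 0 ≤ W x s y) (hWsum : ∀ x s, ∑ y, W x s y = 1)
    (U : X → S → ℝ) (hUnn : ∀ x s, 0 ≤ U x s) (hUsum : ∀ x, ∑ s, U x s = 1)
    (hsym : ∀ x x' y, ∑ s, U x' s * W x s y = ∑ s, U x s * W x' s y)
    (n M : ℕ) (hM : 0 < M) (xw : Fin M → Fin n → X) (φ : (Fin n → Y) → Fin M) :
    ((M : ℝ) - 1) / (2 * M) ≤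
      ∑ s : Fin n → S,
        ((1 / (M : ℝ)) * ∑ i : Fin M, ∏ t, U (xw i t) (s t)) *
          ((1 / (M : ℝ)) * ∑ j : Fin M, ∑ y : Fin n → Y,
            (if φ y = j then 0 else ∏ t, W (xw j t) (s t) (y t))) := by
  classical
  set Un : Fin M → (Fin n → S) → ℝ := fun i s => ∏ t, U (xw i t) (s t) with hUndef
  set Wn : Fin M → (Fin n → S) → (Fin n → Y) → ℝ :=
    fun j s y => ∏ t, W (xw j t) (s t) (y t) with hWndef
  set Q : Fin M → Fin M → (Fin n → Y) → ℝ :=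
    fun i j y => ∑ s, Un i s * Wn j s y with hQdef
  have hUnnn : ∀ i s, 0 ≤ Un i s := fun i s =>
    Finset.prod_nonneg fun t _ => hUnn _ _
  have hWnnn : ∀ j s y, 0 ≤ Wn j s y := fun j s y =>
    Finset.prod_nonneg fun t _ => hWnn _ _ _
  have hUnsum : ∀ i, ∑ s, Un i s = 1 := by
    intro i
    rw [hUndef, stmt17_aux_fubini]
    exact Finset.prod_eq_one fun t _ => hUsum _
  have hWnsum : ∀ j s, ∑ y, Wn j s y = 1 := by
    intro j s
    rw [hWndef, stmt17_aux_fubini]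
    exact Finset.prod_eq_one fun t _ => hWsum _ _
  have hQfact : ∀ i j y, Q i j y = ∏ t, ∑ a, U (xw i t) a * W (xw j t) a (y t) := by
    intro i j y
    rw [hQdef]
    simp only [hUndef, hWndef, ← Finset.prod_mul_distrib]
    exact stmt17_aux_fubini (fun t a => U (xw i t) a * W (xw j t) a (y t))
  have hQsymm : ∀ i j y, Q i j y = Q j i y := by
    intro i j y
    rw [hQfact, hQfact]
    exact Finset.prod_congr rfl fun t _ => hsym _ _ _
  have hQnn : ∀ i j y, 0 ≤ Q i j y := fun i j y =>
    Finset.sum_nonneg fun s _ => mul_nonneg (hUnnn _ _) (hWnnn _ _ _)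
  have hQsum : ∀ i j, ∑ y, Q i j y = 1 := by
    intro i j
    rw [hQdef]
    simp only
    rw [Finset.sum_comm]
    calc ∑ s, ∑ y, Un i s * Wn j s y = ∑ s, Un i s * ∑ y, Wn j s y := by
          simp [Finset.mul_sum]
      _ = 1 := by simp [hWnsum, hUnsum]
  set T : Fin M → Fin M → ℝ :=
    fun i j => ∑ y, if φ y = j then 0 else Q i j y with hTdef
  have hTnn : ∀ i j, 0 ≤ T i j := by
    intro i j
    show 0 ≤ ∑ y, if φ y = j then 0 else Q i j y
    refine Finset.sum_nonneg fun y _ => ?_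
    split
    · exact le_rfl
    · exact hQnn i j y
  have hTpair : ∀ i j, i ≠ j → 1 ≤ T i j + T j i := by
    intro i j hij
    show 1 ≤ (∑ y, if φ y = j then 0 else Q i j y) + ∑ y, if φ y = i then 0 else Q j i y
    rw [← Finset.sum_add_distrib, ← hQsum i j]
    apply Finset.sum_le_sum
    intro y _
    rw [hQsymm j i y]
    by_cases h : φ y = j
    · have h2 : φ y ≠ i := fun hh => hij (hh.symm.trans h)
      simp [h, h2, Ne.symm hij]
    · simp only [if_neg h]
      split
      · simp
      · nlinarith [hQnn i j y]
  set S0 : ℝ := ∑ i, ∑ j, T i j with hS0def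
  have hS0 : (M : ℝ) * ((M : ℝ) - 1) ≤ 2 * S0 := by
    have hswap : S0 = ∑ i, ∑ j, T j i := Finset.sum_comm
    have h2 : 2 * S0 = ∑ i : Fin M, ∑ j : Fin M, (T i j + T j i) := by
      simp only [Finset.sum_add_distrib]
      rw [← hS0def, ← hswap]; ring
    rw [h2]
    have hrow : ∀ i : Fin M, ∑ j : Fin M, (if i = j then (0:ℝ) else 1) = M - 1 := by
      intro i
      have h1 : ∑ j : Fin M, ((1:ℝ) - if i = j then 1 else 0) = M - 1 := by
        rw [Finset.sum_sub_distrib]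
        simp [Finset.sum_ite_eq]
      rw [← h1]
      exact Finset.sum_congr rfl fun j _ => by split <;> ring
    calc (M : ℝ) * ((M : ℝ) - 1)
        = ∑ i : Fin M, ∑ j : Fin M, (if i = j then (0:ℝ) else 1) := by
          rw [Finset.sum_congr rfl fun i _ => hrow i, Finset.sum_const,
            Finset.card_univ, Fintype.card_fin, nsmul_eq_mul]
      _ ≤ ∑ i : Fin M, ∑ j : Fin M, (T i j + T j i) := by
          refine Finset.sum_le_sum fun i _ => Finset.sum_le_sum fun j _ => ?_
          split
          · next h => linarith [hTnn i j, hTnn j i]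
          · next h => exact hTpair i j h
  have key : ∀ i j : Fin M,
      (∑ s : Fin n → S, Un i s * ∑ y : Fin n → Y, (if φ y = j then 0 else Wn j s y))
        = T i j := by
    intro i j
    show _ = ∑ y, if φ y = j then 0 else Q i j y
    simp only [Finset.mul_sum, mul_ite, mul_zero]
    rw [Finset.sum_comm]
    refine Finset.sum_congr rfl fun y _ => ?_
    by_cases h : φ y = j
    · simp [h]
    · simp only [if_neg h]; rfl
  have hexpand : (∑ s : Fin n → S,
        ((1 / (M : ℝ)) * ∑ i : Fin M, ∏ t, U (xw i t) (s t)) *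
          ((1 / (M : ℝ)) * ∑ j : Fin M, ∑ y : Fin n → Y,
            (if φ y = j then 0 else ∏ t, W (xw j t) (s t) (y t))))
      = (1 / (M : ℝ)) * ((1 / (M : ℝ)) * S0) := by
    show (∑ s : Fin n → S,
        ((1 / (M : ℝ)) * ∑ i : Fin M, Un i s) *
          ((1 / (M : ℝ)) * ∑ j : Fin M, ∑ y : Fin n → Y,
            (if φ y = j then 0 else Wn j s y))) = _
    rw [hS0def]
    calc (∑ s : Fin n → S,
          ((1 / (M : ℝ)) * ∑ i : Fin M, Un i s) *
            ((1 / (M : ℝ)) * ∑ j : Fin M, ∑ y : Fin n → Y,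
              (if φ y = j then 0 else Wn j s y)))
        = (1 / (M : ℝ)) * ((1 / (M : ℝ)) *
            ∑ s : Fin n → S, (∑ i : Fin M, Un i s) *
              (∑ j : Fin M, ∑ y : Fin n → Y, (if φ y = j then 0 else Wn j s y))) := by
          rw [Finset.mul_sum, Finset.mul_sum]
          exact Finset.sum_congr rfl fun s _ => by ring
      _ = (1 / (M : ℝ)) * ((1 / (M : ℝ)) * ∑ i, ∑ j, T i j) := by
          congr 1
          congr 1
          calc ∑ s : Fin n → S, (∑ i : Fin M, Un i s) *
                  (∑ j : Fin M, ∑ y : Fin n → Y, (if φ y = j then 0 else Wn j s y))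
              = ∑ s : Fin n → S, ∑ i : Fin M, ∑ j : Fin M,
                  Un i s * ∑ y : Fin n → Y, (if φ y = j then 0 else Wn j s y) := by
                refine Finset.sum_congr rfl fun s _ => ?_
                rw [Finset.sum_mul_sum]
            _ = ∑ i : Fin M, ∑ j : Fin M, ∑ s : Fin n → S,
                  Un i s * ∑ y : Fin n → Y, (if φ y = j then 0 else Wn j s y) := by
                rw [Finset.sum_comm]
                exact Finset.sum_congr rfl fun i _ => Finset.sum_comm
            _ = ∑ i, ∑ j, T i j := by
                exact Finset.sum_congr rfl fun i _ =>
                  Finset.sum_congr rfl fun j _ => key i j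
  rw [hexpand]
  have hMpos : (0 : ℝ) < M := by exact_mod_cast hM
  rw [div_le_iff₀ (by positivity)]
  have heq : (1 / (M : ℝ)) * ((1 / (M : ℝ)) * S0) * (2 * M) = (2 * S0) / M := by
    field_simp
  rw [heq, le_div_iff₀ hMpos]
  nlinarith
end
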